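/- Let p > 1. There exist constants c, C > 0 depending only on p (in particular independent of δ, the dimension d, and the matrices) such that for all δ ≥ 0, all d ≥ 1 and all real d×d matrices P, Q: c·|F(P)−F(Q)|² ≤ (S(P)−S(Q)):(P−Q) ≤ C·|F(P)−F(Q)|². -/

import Mathlib

open Matrix

/-- Symmetric part `P^sym = (P + Pᵀ)/2` of a square matrix. -/
noncomputable def msym {d : ℕ} (P : Matrix (Fin d) (Fin d) ℝ) : Matrix (Fin d) (Fin d) ℝ :=
  (2⁻¹ : ℝ) • (P + Pᵀ)

/-- Frobenius inner product `A:B = ∑ᵢⱼ Aᵢⱼ Bᵢⱼ`. -/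
noncomputable def mdot {d : ℕ} (A B : Matrix (Fin d) (Fin d) ℝ) : ℝ :=
  ∑ i, ∑ j, A i j * B i j

/-- Frobenius norm `|A| = (A:A)^(1/2)`. -/
noncomputable def mnorm {d : ℕ} (A : Matrix (Fin d) (Fin d) ℝ) : ℝ :=
  Real.sqrt (mdot A A)

/-- Stress tensor `S(P) = (δ + |P^sym|)^(p-2) • P^sym` (real power, `0^r = 0` for `r < 0`). -/
noncomputable def Smap (p δ : ℝ) {d : ℕ} (P : Matrix (Fin d) (Fin d) ℝ) :
    Matrix (Fin d) (Fin d) ℝ :=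
  ((δ + mnorm (msym P)) ^ (p - 2)) • msym P

/-- Associated function `F(P) = (δ + |P^sym|)^((p-2)/2) • P^sym`. -/
noncomputable def Fmap (p δ : ℝ) {d : ℕ} (P : Matrix (Fin d) (Fin d) ℝ) :
    Matrix (Fin d) (Fin d) ℝ :=
  ((δ + mnorm (msym P)) ^ ((p - 2) / 2)) • msym P

/-!
Since `S(P) - S(Q)` is symmetric, both sides only involve `A = P^sym` and `B = Q^sym`; flattening
matrices into a Euclidean space, the claim becomes one about the maps `x ↦ (δ + ‖x‖)^e • x`
(`e = p - 2` for `S`, `e = (p - 2)/2` for `F`) on any real inner product space. With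
`a = ‖x‖ ≥ b = ‖y‖`, `s = ⟪x, y⟫`, `γ = (δ + a)^((p-2)/2)`, `η = (δ + b)^((p-2)/2)` one has
`⟪S x - S y, x - y⟫ = γ²a² + η²b² - (γ² + η²) s` and `‖F x - F y‖² = γ²a² + η²b² - 2γη s`.
Both are affine in `s`, so it suffices to compare them at the ends `s = ±ab` of the
Cauchy–Schwarz range. At `s = -ab` this is elementary; at `s = ab` it reduces to the
one-variable fact that `(δ + a)^e a - (δ + b)^e b` lies between `min 1 (1 + e)` and
`max 1 (1 + e)` times `(δ + a)^e (a - b)` for `e ≥ -1`, a consequence of Bernoulli's inequality.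
-/

namespace Real

lemma rpow_sub_rpow_mul_le_of_le_one {u v q : ℝ} (hv : 0 < v) (hvu : v ≤ u) (hq₀ : 0 ≤ q)
    (hq₁ : q ≤ 1) : (u ^ q - v ^ q) * v ≤ q * v ^ q * (u - v) := by
  have hvq : 0 < v ^ q := rpow_pos_of_pos hv q
  have h := rpow_one_add_le_one_add_mul_self (s := u / v - 1)
    (by linarith [div_nonneg (hv.le.trans hvu) hv.le]) hq₀ hq₁
  rw [add_sub_cancel, div_rpow (hv.le.trans hvu) hv.le, div_le_iff₀ hvq] at h
  have h' := mul_le_mul_of_nonneg_right h hv.le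
  field_simp at h'
  nlinarith

lemma rpow_sub_rpow_mul_le_of_one_le {u v q : ℝ} (hv : 0 ≤ v) (hvu : v ≤ u) (hq : 1 ≤ q) :
    (u ^ q - v ^ q) * u ≤ q * u ^ q * (u - v) := by
  rcases hv.trans hvu |>.eq_or_lt with hu | hu
  · obtain rfl : v = 0 := by linarith
    simp [← hu]
  have huq : 0 < u ^ q := rpow_pos_of_pos hu q
  have h := one_add_mul_self_le_rpow_one_add (s := v / u - 1)
    (by linarith [div_nonneg hv hu.le]) hq
  rw [add_sub_cancel, div_rpow hv hu.le, le_div_iff₀ huq] at h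
  have h' := mul_le_mul_of_nonneg_right h hu.le
  field_simp at h'
  nlinarith

lemma rpow_sub_rpow_mul_le {u v q : ℝ} (hv : 0 < v) (hvu : v ≤ u) (hq : 0 ≤ q) :
    (u ^ q - v ^ q) * v ≤ q * u ^ q * (u - v) := by
  have hmono : v ^ q ≤ u ^ q := rpow_le_rpow hv.le hvu hq
  rcases le_total q 1 with hq₁ | hq₁
  · calc (u ^ q - v ^ q) * v ≤ q * v ^ q * (u - v) := rpow_sub_rpow_mul_le_of_le_one hv hvu hq hq₁
      _ ≤ q * u ^ q * (u - v) := by gcongr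
  · calc (u ^ q - v ^ q) * v ≤ (u ^ q - v ^ q) * u := by gcongr
      _ ≤ q * u ^ q * (u - v) := rpow_sub_rpow_mul_le_of_one_le hv.le hvu hq₁

lemma rpow_sub_rpow_mul_le_of_nonpos {u v e : ℝ} (hv : 0 < v) (hvu : v ≤ u) (he₁ : -1 ≤ e)
    (he₀ : e ≤ 0) : (v ^ e - u ^ e) * v ≤ -e * u ^ e * (u - v) := by
  have hu : 0 < u := hv.trans_le hvu
  have h := rpow_sub_rpow_mul_le_of_le_one hv hvu (neg_nonneg.2 he₀) (by linarith)
  rw [rpow_neg hu.le, rpow_neg hv.le] at h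
  have hue := rpow_pos_of_pos hu e
  have hve := rpow_pos_of_pos hv e
  field_simp at h
  nlinarith

end Real

open Real

lemma min_one_add_mul_le_add_rpow_mul_sub {δ e a b : ℝ} (he : -1 ≤ e) (hδ : 0 ≤ δ)
    (hb : 0 ≤ b) (hba : b ≤ a) :
    min 1 (1 + e) * ((δ + a) ^ e * (a - b)) ≤ (δ + a) ^ e * a - (δ + b) ^ e * b := by
  have hsplit : (δ + a) ^ e * a - (δ + b) ^ e * b
      = (δ + a) ^ e * (a - b) + ((δ + a) ^ e - (δ + b) ^ e) * b := by ring
  have hab : 0 ≤ (δ + a) ^ e * (a - b) := mul_nonneg (rpow_nonneg (by linarith) e) (by linarith)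
  rcases le_total 0 e with he₀ | he₀
  · have hmono : (δ + b) ^ e ≤ (δ + a) ^ e := rpow_le_rpow (by linarith) (by linarith) he₀
    rw [min_eq_left (by linarith), hsplit]
    nlinarith
  rw [min_eq_right (by linarith)]
  rcases (show 0 ≤ δ + b by linarith).eq_or_lt with hv | hv
  · obtain rfl : b = 0 := by linarith
    nlinarith
  have hmono : (δ + a) ^ e ≤ (δ + b) ^ e := rpow_le_rpow_of_nonpos hv (by linarith) he₀
  have key := rpow_sub_rpow_mul_le_of_nonpos hv (by linarith : δ + b ≤ δ + a) he he₀
  rw [hsplit]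
  nlinarith

lemma add_rpow_mul_sub_le_max_one_add_mul {δ e a b : ℝ} (hδ : 0 ≤ δ) (hb : 0 ≤ b)
    (hba : b ≤ a) :
    (δ + a) ^ e * a - (δ + b) ^ e * b ≤ max 1 (1 + e) * ((δ + a) ^ e * (a - b)) := by
  have hsplit : (δ + a) ^ e * a - (δ + b) ^ e * b
      = (δ + a) ^ e * (a - b) + ((δ + a) ^ e - (δ + b) ^ e) * b := by ring
  have hab : 0 ≤ (δ + a) ^ e * (a - b) := mul_nonneg (rpow_nonneg (by linarith) e) (by linarith)
  rcases le_total e 0 with he₀ | he₀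
  · rw [max_eq_left (by linarith), hsplit]
    rcases (show 0 ≤ δ + b by linarith).eq_or_lt with hv | hv
    · obtain rfl : b = 0 := by linarith
      simp
    have hmono : (δ + a) ^ e ≤ (δ + b) ^ e := rpow_le_rpow_of_nonpos hv (by linarith) he₀
    nlinarith
  rw [max_eq_right (by linarith), hsplit]
  rcases (show 0 ≤ δ + b by linarith).eq_or_lt with hv | hv
  · obtain rfl : b = 0 := by linarith
    nlinarith
  have hmono : (δ + b) ^ e ≤ (δ + a) ^ e := rpow_le_rpow hv.le (by linarith) he₀
  have key := rpow_sub_rpow_mul_le hv (by linarith : δ + b ≤ δ + a) he₀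
  nlinarith

lemma add_mul_nonneg_of_abs_le {α β m s : ℝ} (hs : |s| ≤ m) (hm : 0 ≤ α + β * m)
    (hm' : 0 ≤ α - β * m) : 0 ≤ α + β * s := by
  obtain ⟨hs₁, hs₂⟩ := abs_le.mp hs
  rcases le_total 0 β with hβ | hβ <;> nlinarith

lemma min_mul_le_of_abs_le {γ η a b s K₁ K₄ : ℝ} (hb : 0 ≤ b) (hba : b ≤ a) (hs : |s| ≤ a * b)
    (hK₁ : 0 ≤ K₁) (hK₄ : 0 < K₄)
    (hF₀ : 0 ≤ γ * a - η * b) (hF : γ * a - η * b ≤ K₄ * (γ * (a - b)))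
    (hS : K₁ * (γ ^ 2 * (a - b)) ≤ γ ^ 2 * a - η ^ 2 * b) :
    min (1 / 2) (K₁ / K₄ ^ 2) * (γ ^ 2 * a ^ 2 + η ^ 2 * b ^ 2 - 2 * γ * η * s)
      ≤ γ ^ 2 * a ^ 2 + η ^ 2 * b ^ 2 - (γ ^ 2 + η ^ 2) * s := by
  set c := min (1 / 2) (K₁ / K₄ ^ 2)
  have hc₀ : 0 ≤ c := le_min (by norm_num) (by positivity)
  have hc₁ : c ≤ 1 / 2 := min_le_left _ _
  have hc₂ : c ≤ K₁ / K₄ ^ 2 := min_le_right _ _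
  have at_ab : c * (γ * a - η * b) ^ 2 ≤ (γ ^ 2 * a - η ^ 2 * b) * (a - b) :=
    calc c * (γ * a - η * b) ^ 2 ≤ K₁ / K₄ ^ 2 * (K₄ * (γ * (a - b))) ^ 2 := by
          gcongr
      _ = K₁ * (γ ^ 2 * (a - b)) * (a - b) := by field_simp
      _ ≤ (γ ^ 2 * a - η ^ 2 * b) * (a - b) := by gcongr
  have at_neg_ab : c * (γ * a + η * b) ^ 2 ≤ (γ ^ 2 * a + η ^ 2 * b) * (a + b) :=
    calc c * (γ * a + η * b) ^ 2 ≤ 1 / 2 * (γ * a + η * b) ^ 2 := by gcongr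
      _ ≤ (γ ^ 2 * a + η ^ 2 * b) * (a + b) := by
          have hab : 0 ≤ a * b := mul_nonneg (hb.trans hba) hb
          nlinarith [sq_nonneg (γ * a - η * b), mul_nonneg hab (sq_nonneg γ),
            mul_nonneg hab (sq_nonneg η)]
  have := add_mul_nonneg_of_abs_le (α := (1 - c) * (γ ^ 2 * a ^ 2 + η ^ 2 * b ^ 2))
    (β := 2 * c * γ * η - (γ ^ 2 + η ^ 2)) hs (by linarith) (by linarith)
  linarith

lemma le_max_mul_of_abs_le {γ η a b s K₂ K₃ : ℝ} (hγ : 0 ≤ γ) (hη : 0 ≤ η) (hb : 0 ≤ b)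
    (hba : b ≤ a) (hs : |s| ≤ a * b) (hK₂ : 0 ≤ K₂) (hK₃ : 0 < K₃)
    (hF : K₃ * (γ * (a - b)) ≤ γ * a - η * b)
    (hS₀ : 0 ≤ γ ^ 2 * a - η ^ 2 * b) (hS : γ ^ 2 * a - η ^ 2 * b ≤ K₂ * (γ ^ 2 * (a - b))) :
    γ ^ 2 * a ^ 2 + η ^ 2 * b ^ 2 - (γ ^ 2 + η ^ 2) * s
      ≤ max 3 (K₂ / K₃ ^ 2) * (γ ^ 2 * a ^ 2 + η ^ 2 * b ^ 2 - 2 * γ * η * s) := by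
  set C := max 3 (K₂ / K₃ ^ 2)
  have hC₁ : 3 ≤ C := le_max_left _ _
  have hC₂ : K₂ / K₃ ^ 2 ≤ C := le_max_right _ _
  have hab : 0 ≤ a - b := by linarith
  have at_ab : (γ ^ 2 * a - η ^ 2 * b) * (a - b) ≤ C * (γ * a - η * b) ^ 2 :=
    calc (γ ^ 2 * a - η ^ 2 * b) * (a - b) ≤ K₂ * (γ ^ 2 * (a - b)) * (a - b) := by gcongr
      _ = K₂ / K₃ ^ 2 * (K₃ * (γ * (a - b))) ^ 2 := by field_simp
      _ ≤ K₂ / K₃ ^ 2 * (γ * a - η * b) ^ 2 := by gcongr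
      _ ≤ C * (γ * a - η * b) ^ 2 := by gcongr
  have at_neg_ab : (γ ^ 2 * a + η ^ 2 * b) * (a + b) ≤ C * (γ * a + η * b) ^ 2 :=
    calc (γ ^ 2 * a + η ^ 2 * b) * (a + b) ≤ 3 * (γ * a + η * b) ^ 2 := by
          nlinarith [mul_le_mul_of_nonneg_right hS₀ (hb.trans hba),
            mul_le_mul_of_nonneg_left hba (mul_nonneg (sq_nonneg γ) (hb.trans hba)),
            mul_nonneg (mul_nonneg (mul_nonneg hγ hη) (hb.trans hba)) hb, sq_nonneg (η * b)]
      _ ≤ C * (γ * a + η * b) ^ 2 := by gcongr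
  have := add_mul_nonneg_of_abs_le (α := (C - 1) * (γ ^ 2 * a ^ 2 + η ^ 2 * b ^ 2))
    (β := γ ^ 2 + η ^ 2 - 2 * C * γ * η) hs (by linarith) (by linarith)
  linarith

section InnerProductSpace

variable {E : Type*} [NormedAddCommGroup E] [InnerProductSpace ℝ E]

noncomputable def normPowSmul (δ e : ℝ) (x : E) : E := (δ + ‖x‖) ^ e • x

lemma inner_smul_sub_smul_sub (α β : ℝ) (x y : E) :
    inner ℝ (α • x - β • y) (x - y)
      = α * ‖x‖ ^ 2 + β * ‖y‖ ^ 2 - (α + β) * inner ℝ x y := by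
  simp only [inner_sub_left, inner_sub_right, real_inner_smul_left, real_inner_self_eq_norm_sq,
    real_inner_comm x y]
  ring

lemma norm_smul_sub_smul_sq (α β : ℝ) (x y : E) :
    ‖α • x - β • y‖ ^ 2 = α ^ 2 * ‖x‖ ^ 2 + β ^ 2 * ‖y‖ ^ 2 - 2 * α * β * inner ℝ x y := by
  rw [norm_sub_sq_real, norm_smul, norm_smul, real_inner_smul_left, real_inner_smul_right,
    mul_pow, mul_pow, Real.norm_eq_abs, Real.norm_eq_abs, sq_abs, sq_abs]
  ring

noncomputable def lowerConst (p : ℝ) : ℝ := min (1 / 2) (min 1 (p - 1) / max 1 (p / 2) ^ 2)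

noncomputable def upperConst (p : ℝ) : ℝ := max 3 (max 1 (p - 1) / min 1 (p / 2) ^ 2)

lemma lowerConst_pos {p : ℝ} (hp : 1 < p) : 0 < lowerConst p :=
  lt_min (by norm_num) (div_pos (lt_min one_pos (by linarith)) (by positivity))

lemma upperConst_pos (p : ℝ) : 0 < upperConst p :=
  lt_of_lt_of_le (by norm_num) (le_max_left _ _)

theorem inner_normPowSmul_sub_bounds_of_norm_le {p δ : ℝ} (hp : 1 < p) (hδ : 0 ≤ δ) {x y : E}
    (hxy : ‖y‖ ≤ ‖x‖) :
    lowerConst p * ‖normPowSmul δ ((p - 2) / 2) x - normPowSmul δ ((p - 2) / 2) y‖ ^ 2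
        ≤ inner ℝ (normPowSmul δ (p - 2) x - normPowSmul δ (p - 2) y) (x - y) ∧
      inner ℝ (normPowSmul δ (p - 2) x - normPowSmul δ (p - 2) y) (x - y)
        ≤ upperConst p * ‖normPowSmul δ ((p - 2) / 2) x - normPowSmul δ ((p - 2) / 2) y‖ ^ 2 := by
  have hb : 0 ≤ ‖y‖ := norm_nonneg y
  have hsq : ∀ t : ℝ, 0 ≤ t → (δ + t) ^ (p - 2) = ((δ + t) ^ ((p - 2) / 2)) ^ 2 := fun t ht => by
    rw [← rpow_mul_natCast (by linarith)]
    norm_num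
  have hF_lower := min_one_add_mul_le_add_rpow_mul_sub (e := (p - 2) / 2) (by linarith) hδ hb hxy
  have hF_upper := add_rpow_mul_sub_le_max_one_add_mul (e := (p - 2) / 2) hδ hb hxy
  have hS_lower := min_one_add_mul_le_add_rpow_mul_sub (e := p - 2) (by linarith) hδ hb hxy
  have hS_upper := add_rpow_mul_sub_le_max_one_add_mul (e := p - 2) hδ hb hxy
  rw [show 1 + (p - 2) / 2 = p / 2 by ring] at hF_lower hF_upper
  rw [show 1 + (p - 2) = p - 1 by ring, hsq _ hb, hsq _ (hb.trans hxy)] at hS_lower hS_upper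
  simp only [normPowSmul, lowerConst, upperConst, inner_smul_sub_smul_sub, norm_smul_sub_smul_sq,
    hsq _ hb, hsq _ (hb.trans hxy)]
  set γ := (δ + ‖x‖) ^ ((p - 2) / 2)
  set η := (δ + ‖y‖) ^ ((p - 2) / 2)
  have hγ : 0 ≤ γ := rpow_nonneg (by linarith) _
  have hη : 0 ≤ η := rpow_nonneg (by linarith) _
  have hs := abs_real_inner_le_norm x y
  have hK₁ : 0 ≤ min 1 (p - 1) := le_min zero_le_one (by linarith)
  have hK₃ : 0 < min 1 (p / 2) := lt_min one_pos (by linarith)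
  have hF₀ : 0 ≤ γ * ‖x‖ - η * ‖y‖ :=
    le_trans (mul_nonneg hK₃.le (mul_nonneg hγ (by linarith))) hF_lower
  have hS₀ : 0 ≤ γ ^ 2 * ‖x‖ - η ^ 2 * ‖y‖ :=
    le_trans (mul_nonneg hK₁ (mul_nonneg (sq_nonneg γ) (by linarith))) hS_lower
  exact ⟨min_mul_le_of_abs_le hb hxy hs hK₁ (one_pos.trans_le (le_max_left _ _)) hF₀ hF_upper
      hS_lower,
    le_max_mul_of_abs_le hγ hη hb hxy hs (zero_le_one.trans (le_max_left _ _)) hK₃ hF_lower hS₀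
      hS_upper⟩

theorem inner_normPowSmul_sub_bounds {p δ : ℝ} (hp : 1 < p) (hδ : 0 ≤ δ) (x y : E) :
    lowerConst p * ‖normPowSmul δ ((p - 2) / 2) x - normPowSmul δ ((p - 2) / 2) y‖ ^ 2
        ≤ inner ℝ (normPowSmul δ (p - 2) x - normPowSmul δ (p - 2) y) (x - y) ∧
      inner ℝ (normPowSmul δ (p - 2) x - normPowSmul δ (p - 2) y) (x - y)
        ≤ upperConst p * ‖normPowSmul δ ((p - 2) / 2) x - normPowSmul δ ((p - 2) / 2) y‖ ^ 2 := by
  rcases le_total ‖y‖ ‖x‖ with hxy | hyx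
  · exact inner_normPowSmul_sub_bounds_of_norm_le hp hδ hxy
  · rw [← inner_neg_neg, neg_sub, neg_sub, norm_sub_rev]
    exact inner_normPowSmul_sub_bounds_of_norm_le hp hδ hyx

end InnerProductSpace

section Frobenius

variable {d : ℕ}

def toFrobenius (A : Matrix (Fin d) (Fin d) ℝ) : EuclideanSpace ℝ (Fin d × Fin d) :=
  WithLp.toLp 2 fun ij => A ij.1 ij.2

lemma toFrobenius_sub (A B : Matrix (Fin d) (Fin d) ℝ) :
    toFrobenius (A - B) = toFrobenius A - toFrobenius B := rfl

lemma toFrobenius_smul (c : ℝ) (A : Matrix (Fin d) (Fin d) ℝ) :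
    toFrobenius (c • A) = c • toFrobenius A := rfl

lemma inner_toFrobenius (A B : Matrix (Fin d) (Fin d) ℝ) :
    inner ℝ (toFrobenius A) (toFrobenius B) = mdot A B := by
  simp [toFrobenius, PiLp.inner_apply, Fintype.sum_prod_type, mdot, mul_comm]

lemma norm_toFrobenius (A : Matrix (Fin d) (Fin d) ℝ) : ‖toFrobenius A‖ = mnorm A := by
  rw [norm_eq_sqrt_real_inner, inner_toFrobenius, mnorm]

lemma msym_sub (P Q : Matrix (Fin d) (Fin d) ℝ) : msym (P - Q) = msym P - msym Q := by
  simp only [msym, transpose_sub, ← smul_sub]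
  abel_nf

lemma msym_isSymm (P : Matrix (Fin d) (Fin d) ℝ) : (msym P).IsSymm := by
  simp [IsSymm, msym, add_comm]

lemma mdot_msym_of_isSymm {M : Matrix (Fin d) (Fin d) ℝ} (hM : M.IsSymm)
    (X : Matrix (Fin d) (Fin d) ℝ) :
    mdot M (msym X) = mdot M X := by
  have htr : ∑ i, ∑ j, M i j * X j i = mdot M X := by
    rw [Finset.sum_comm]
    simp only [hM.apply]
    rfl
  simp only [mdot, msym, Matrix.smul_apply, Matrix.add_apply, transpose_apply, smul_eq_mul,
    mul_add, mul_left_comm _ (2⁻¹ : ℝ), Finset.sum_add_distrib, ← Finset.mul_sum, htr]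
  ring

lemma mdot_Smap_sub (p δ : ℝ) (P Q : Matrix (Fin d) (Fin d) ℝ) :
    mdot (Smap p δ P - Smap p δ Q) (P - Q)
      = inner ℝ (normPowSmul δ (p - 2) (toFrobenius (msym P))
          - normPowSmul δ (p - 2) (toFrobenius (msym Q)))
          (toFrobenius (msym P) - toFrobenius (msym Q)) := by
  have hsymm : (Smap p δ P - Smap p δ Q).IsSymm :=
    ((msym_isSymm P).smul _).sub ((msym_isSymm Q).smul _)
  rw [← mdot_msym_of_isSymm hsymm, msym_sub, ← inner_toFrobenius, Smap, Smap, toFrobenius_sub,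
    toFrobenius_sub, toFrobenius_smul, toFrobenius_smul, normPowSmul, normPowSmul,
    norm_toFrobenius, norm_toFrobenius]

lemma mnorm_Fmap_sub (p δ : ℝ) (P Q : Matrix (Fin d) (Fin d) ℝ) :
    mnorm (Fmap p δ P - Fmap p δ Q)
      = ‖normPowSmul δ ((p - 2) / 2) (toFrobenius (msym P))
          - normPowSmul δ ((p - 2) / 2) (toFrobenius (msym Q))‖ := by
  rw [← norm_toFrobenius, Fmap, Fmap, toFrobenius_sub, toFrobenius_smul, toFrobenius_smul,
    normPowSmul, normPowSmul, norm_toFrobenius, norm_toFrobenius]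

end Frobenius

theorem stmt6 (p : ℝ) (hp : 1 < p) :
    ∃ c : ℝ, 0 < c ∧ ∃ C : ℝ, 0 < C ∧
      ∀ δ : ℝ, 0 ≤ δ → ∀ d : ℕ, 1 ≤ d → ∀ P Q : Matrix (Fin d) (Fin d) ℝ,
        c * mnorm (Fmap p δ P - Fmap p δ Q) ^ 2
            ≤ mdot (Smap p δ P - Smap p δ Q) (P - Q) ∧
        mdot (Smap p δ P - Smap p δ Q) (P - Q)
            ≤ C * mnorm (Fmap p δ P - Fmap p δ Q) ^ 2 := by
  refine ⟨lowerConst p, lowerConst_pos hp, upperConst p, upperConst_pos p,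
    fun δ hδ d _ P Q => ?_⟩
  rw [mdot_Smap_sub, mnorm_Fmap_sub]
  exact inner_normPowSmul_sub_bounds hp hδ _ _
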